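/- For a purely twisting rotationally symmetric line congruence with F = i√(ψ(θ)) e^{iφ}/cos²(θ/2), where ψ > 0 is smooth, the twist and shear are λ = (ψ′ + 2cot θ · ψ)/(2√ψ) and σ = i(ψ′ − 2cot θ · ψ) e^{−2iφ}/(2√ψ). Consequently λ² − |σ|² = 2 cot θ · ψ′, so the congruence is definite if and only if ψ′ > 0 (for 0 < θ < π/2). -/

import Mathlib

noncomputable section

open Real

/-- The operator `∂/∂ξ` expressed in the polar coordinates `(θ, φ)` via
`∂/∂ξ = cos²(θ/2)(∂_θ − i(2 sin(θ/2)cos(θ/2))^{-1} ∂_φ) e^{−iφ}`. -/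
def Dxi (f : ℝ → ℝ → ℂ) (θ φ : ℝ) : ℂ :=
  Complex.exp (-Complex.I * φ) * ((Real.cos (θ / 2) : ℝ) : ℂ) ^ 2 *
    (deriv (fun s => f s φ) θ -
      Complex.I / (2 * ((Real.sin (θ / 2) : ℝ) : ℂ) * ((Real.cos (θ / 2) : ℝ) : ℂ)) *
        deriv (fun s => f θ s) φ)


private lemma sigma_model {c s g p : ℝ} {E : ℂ} (hc : c ≠ 0) (hs : s ≠ 0)
    (hg : g ≠ 0) (hE : E ≠ 0) (hsc : s ^ 2 + c ^ 2 = 1) :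
    -(E⁻¹ * ((c : ℝ) : ℂ) ^ 2 *
      ((((p / (2 * g) * c ^ 2 - g * -(c * s)) / (c ^ 2) ^ 2 : ℝ) : ℂ) *
          (-Complex.I * E⁻¹) -
        Complex.I / (2 * ((s : ℝ) : ℂ) * ((c : ℝ) : ℂ)) *
          (-Complex.I * ((g : ℝ) : ℂ) / ((c : ℝ) : ℂ) ^ 2 * (-Complex.I * E⁻¹)))) =
    Complex.I * (((p - (c ^ 2 - s ^ 2) / (s * c) * g ^ 2 : ℝ)) : ℂ) * (E⁻¹ * E⁻¹) /
      (2 * ((g : ℝ) : ℂ)) := by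
  have hcC : ((c : ℝ) : ℂ) ≠ 0 := Complex.ofReal_ne_zero.mpr hc
  have hsC : ((s : ℝ) : ℂ) ≠ 0 := Complex.ofReal_ne_zero.mpr hs
  have hgC : ((g : ℝ) : ℂ) ≠ 0 := Complex.ofReal_ne_zero.mpr hg
  have hI3 : Complex.I ^ 3 = -Complex.I := by rw [pow_succ, Complex.I_sq]; ring
  have hscC : (((s : ℝ) : ℂ)) ^ 2 + (((c : ℝ) : ℂ)) ^ 2 = 1 := by
    exact_mod_cast congrArg (Complex.ofReal) hsc
  push_cast
  field_simp [hcC, hsC, hgC, hE]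
  linear_combination ((g : ℂ)) ^ 2 * hscC + ((g : ℂ)) ^ 2 * Complex.I_sq

private lemma lam_model {c s g p : ℝ} {E : ℂ} (hc : c ≠ 0) (hs : s ≠ 0)
    (hg : g ≠ 0) (hE : E ≠ 0) (hsc : s ^ 2 + c ^ 2 = 1) :
    (((1 / c ^ 2 : ℝ) : ℂ)) ^ 2 *
      (E⁻¹ * ((c : ℝ) : ℂ) ^ 2 *
        ((((p / (2 * g) * c ^ 2 + g * -(c * s)) : ℝ) : ℂ) * (Complex.I * E) -
          Complex.I / (2 * ((s : ℝ) : ℂ) * ((c : ℝ) : ℂ)) *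
            (Complex.I * ((g : ℝ) : ℂ) / ((c : ℝ) : ℂ) ^ 2 /
              (((1 / c ^ 2 : ℝ) : ℂ)) ^ 2 * (Complex.I * E)))) =
    (((p + (c ^ 2 - s ^ 2) / (s * c) * g ^ 2) / (2 * g) : ℝ) : ℂ) * Complex.I := by
  have hcC : ((c : ℝ) : ℂ) ≠ 0 := Complex.ofReal_ne_zero.mpr hc
  have hsC : ((s : ℝ) : ℂ) ≠ 0 := Complex.ofReal_ne_zero.mpr hs
  have hgC : ((g : ℝ) : ℂ) ≠ 0 := Complex.ofReal_ne_zero.mpr hg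
  have hI3 : Complex.I ^ 3 = -Complex.I := by rw [pow_succ, Complex.I_sq]; ring
  have hscC : (((s : ℝ) : ℂ)) ^ 2 + (((c : ℝ) : ℂ)) ^ 2 = 1 := by
    exact_mod_cast congrArg (Complex.ofReal) hsc
  push_cast
  field_simp [hcC, hsC, hgC, hE]
  linear_combination (-((g : ℂ)) ^ 2) * hscC - ((g : ℂ)) ^ 2 * Complex.I_sq

set_option maxHeartbeats 2000000 in
/-- Twist and shear of a purely twisting rotationally symmetric line congruence
`F = i√ψ(θ) e^{iφ}/cos²(θ/2)`: `λ = (ψ′ + 2cotθ ψ)/(2√ψ)`,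
`σ = i(ψ′ − 2cotθ ψ)e^{−2iφ}/(2√ψ)`; consequently `λ² − |σ|² = 2cotθ ψ′`, and the
congruence is definite iff `ψ′ > 0`. -/
theorem twist_shear_purely_twisting (ψ : ℝ → ℝ) (hψ : ContDiff ℝ (⊤ : ℕ∞) ψ)
    (hpos : ∀ s, 0 < ψ s) (θ φ : ℝ) (hθ : θ ∈ Set.Ioo 0 (π / 2)) :
    let F : ℝ → ℝ → ℂ := fun a b =>
      Complex.I * (Real.sqrt (ψ a) : ℂ) * Complex.exp (Complex.I * b) /
        ((Real.cos (a / 2) : ℝ) : ℂ) ^ 2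
    let σ : ℂ := -Dxi (fun a b => (starRingEnd ℂ) (F a b)) θ φ
    let lam : ℝ := ((((1 + Real.tan (θ / 2) ^ 2) : ℝ) : ℂ) ^ 2 *
      Dxi (fun a b => F a b / (((1 + Real.tan (a / 2) ^ 2) : ℝ) : ℂ) ^ 2) θ φ).im
    lam = (deriv ψ θ + 2 * Real.cot θ * ψ θ) / (2 * Real.sqrt (ψ θ)) ∧
    σ = Complex.I * (((deriv ψ θ - 2 * Real.cot θ * ψ θ) : ℝ) : ℂ) *
        Complex.exp (-2 * Complex.I * φ) / (2 * ((Real.sqrt (ψ θ) : ℝ) : ℂ)) ∧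
    lam ^ 2 - ‖σ‖ ^ 2 = 2 * Real.cot θ * deriv ψ θ ∧
    (0 < lam ^ 2 - ‖σ‖ ^ 2 ↔ 0 < deriv ψ θ) := by
  intro F σ lam
  obtain ⟨hθ0, hθπ⟩ := hθ
  have hpi := Real.pi_pos
  -- basic positivity
  have hcpos : 0 < Real.cos (θ / 2) :=
    Real.cos_pos_of_mem_Ioo ⟨by linarith, by linarith⟩
  have hspos : 0 < Real.sin (θ / 2) :=
    Real.sin_pos_of_pos_of_lt_pi (by linarith) (by linarith)
  have hgpos : 0 < Real.sqrt (ψ θ) := Real.sqrt_pos.mpr (hpos θ)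
  have hsinθ : Real.sin θ = 2 * Real.sin (θ / 2) * Real.cos (θ / 2) := by
    rw [show θ = 2 * (θ / 2) by ring, Real.sin_two_mul]; ring_nf
  have hcosθ : Real.cos θ = Real.cos (θ / 2) ^ 2 - Real.sin (θ / 2) ^ 2 := by
    rw [show θ = 2 * (θ / 2) by ring, Real.cos_two_mul']; ring_nf
  have hsc : Real.sin (θ / 2) ^ 2 + Real.cos (θ / 2) ^ 2 = 1 :=
    Real.sin_sq_add_cos_sq (θ / 2)
  have hg2 : Real.sqrt (ψ θ) ^ 2 = ψ θ := Real.sq_sqrt (hpos θ).le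
  have htan : (1 : ℝ) + Real.tan (θ / 2) ^ 2 = 1 / Real.cos (θ / 2) ^ 2 := by
    rw [Real.tan_eq_sin_div_cos, div_pow]
    field_simp
    linarith [hsc]
  have hcot : Real.cot θ = (Real.cos (θ / 2) ^ 2 - Real.sin (θ / 2) ^ 2) /
      (2 * Real.sin (θ / 2) * Real.cos (θ / 2)) := by
    rw [Real.cot_eq_cos_div_sin, hcosθ, hsinθ]
  have hA : deriv ψ θ - 2 * Real.cot θ * ψ θ =
      deriv ψ θ - (Real.cos (θ / 2) ^ 2 - Real.sin (θ / 2) ^ 2) /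
        (Real.sin (θ / 2) * Real.cos (θ / 2)) * Real.sqrt (ψ θ) ^ 2 := by
    rw [hcot, hg2]
    field_simp
  have hB : deriv ψ θ + 2 * Real.cot θ * ψ θ =
      deriv ψ θ + (Real.cos (θ / 2) ^ 2 - Real.sin (θ / 2) ^ 2) /
        (Real.sin (θ / 2) * Real.cos (θ / 2)) * Real.sqrt (ψ θ) ^ 2 := by
    rw [hcot, hg2]
    field_simp
  -- real derivatives
  have hψd : HasDerivAt ψ (deriv ψ θ) θ := ((hψ.differentiable (by simp)) θ).hasDerivAt
  have Hg : HasDerivAt (fun a => Real.sqrt (ψ a))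
      (deriv ψ θ / (2 * Real.sqrt (ψ θ))) θ := by
    have := (Real.hasDerivAt_sqrt (hpos θ).ne').comp θ hψd
    exact this.congr_deriv (by ring)
  have Hc2 : HasDerivAt (fun a : ℝ => Real.cos (a / 2) ^ 2)
      (-(Real.cos (θ / 2) * Real.sin (θ / 2))) θ := by
    have h2 : HasDerivAt (fun a : ℝ => a / 2) (1 / 2) θ := (hasDerivAt_id θ).div_const 2
    have hc : HasDerivAt (fun a : ℝ => Real.cos (a / 2)) (-Real.sin (θ / 2) * (1 / 2)) θ :=
      (Real.hasDerivAt_cos (θ / 2)).comp (h := fun a : ℝ => a / 2) θ h2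
    have := hc.pow 2
    exact this.congr_deriv (by ring)
  have Hu : HasDerivAt (fun a => Real.sqrt (ψ a) / Real.cos (a / 2) ^ 2)
      ((deriv ψ θ / (2 * Real.sqrt (ψ θ)) * Real.cos (θ / 2) ^ 2 -
        Real.sqrt (ψ θ) * (-(Real.cos (θ / 2) * Real.sin (θ / 2)))) /
          (Real.cos (θ / 2) ^ 2) ^ 2) θ :=
    Hg.div Hc2 (pow_ne_zero 2 hcpos.ne')
  have Hv : HasDerivAt (fun a => Real.sqrt (ψ a) * Real.cos (a / 2) ^ 2)
      (deriv ψ θ / (2 * Real.sqrt (ψ θ)) * Real.cos (θ / 2) ^ 2 +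
        Real.sqrt (ψ θ) * (-(Real.cos (θ / 2) * Real.sin (θ / 2)))) θ :=
    Hg.mul Hc2
  -- complex exponential derivatives
  have Hexp : HasDerivAt (fun b : ℝ => Complex.exp (Complex.I * b))
      (Complex.I * Complex.exp (Complex.I * φ)) φ := by
    have h1 : HasDerivAt (fun z : ℂ => Complex.exp (Complex.I * z))
        (Complex.I * Complex.exp (Complex.I * (φ : ℂ))) (φ : ℂ) := by
      have := (Complex.hasDerivAt_exp (Complex.I * φ)).comp (φ : ℂ)
        ((hasDerivAt_id (φ : ℂ)).const_mul Complex.I)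
      exact this.congr_deriv (by ring)
    exact h1.comp_ofReal
  have Hexpn : HasDerivAt (fun b : ℝ => Complex.exp (-Complex.I * b))
      (-Complex.I * Complex.exp (-Complex.I * φ)) φ := by
    have h1 : HasDerivAt (fun z : ℂ => Complex.exp (-Complex.I * z))
        (-Complex.I * Complex.exp (-Complex.I * (φ : ℂ))) (φ : ℂ) := by
      have := (Complex.hasDerivAt_exp (-Complex.I * φ)).comp (φ : ℂ)
        ((hasDerivAt_id (φ : ℂ)).const_mul (-Complex.I))
      exact this.congr_deriv (by ring)
    exact h1.comp_ofReal
  have hF : F = fun (a b : ℝ) =>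
      Complex.I * (Real.sqrt (ψ a) : ℂ) * Complex.exp (Complex.I * (b : ℂ)) /
        ((Real.cos (a / 2) : ℝ) : ℂ) ^ 2 := rfl
  -- the four partial derivatives
  have D1 : deriv (fun a => (starRingEnd ℂ)
      (Complex.I * (Real.sqrt (ψ a) : ℂ) * Complex.exp (Complex.I * (φ : ℂ)) /
        ((Real.cos (a / 2) : ℝ) : ℂ) ^ 2)) θ =
      (((deriv ψ θ / (2 * Real.sqrt (ψ θ)) * Real.cos (θ / 2) ^ 2 -
        Real.sqrt (ψ θ) * (-(Real.cos (θ / 2) * Real.sin (θ / 2)))) /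
          (Real.cos (θ / 2) ^ 2) ^ 2 : ℝ) : ℂ) *
        (-Complex.I * Complex.exp (-Complex.I * φ)) := by
    have hfun : (fun a => (starRingEnd ℂ)
        (Complex.I * (Real.sqrt (ψ a) : ℂ) * Complex.exp (Complex.I * (φ : ℂ)) /
          ((Real.cos (a / 2) : ℝ) : ℂ) ^ 2)) =
        fun a => ((Real.sqrt (ψ a) / Real.cos (a / 2) ^ 2 : ℝ) : ℂ) *
          (-Complex.I * Complex.exp (-Complex.I * (φ : ℂ))) := by
      funext a
      rw [map_div₀, map_mul, map_mul, Complex.conj_I, Complex.conj_ofReal,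
        ← Complex.exp_conj, map_mul, Complex.conj_I, Complex.conj_ofReal, map_pow,
        Complex.conj_ofReal, Complex.ofReal_div, Complex.ofReal_pow]
      ring
    rw [hfun]
    exact (Hu.ofReal_comp.mul_const _).deriv
  have D2 : deriv (fun b : ℝ => (starRingEnd ℂ)
      (Complex.I * (Real.sqrt (ψ θ) : ℂ) * Complex.exp (Complex.I * (b : ℂ)) /
        ((Real.cos (θ / 2) : ℝ) : ℂ) ^ 2)) φ =
      (-Complex.I * (Real.sqrt (ψ θ) : ℂ) / ((Real.cos (θ / 2) : ℝ) : ℂ) ^ 2) *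
        (-Complex.I * Complex.exp (-Complex.I * φ)) := by
    have hfun : (fun b : ℝ => (starRingEnd ℂ)
        (Complex.I * (Real.sqrt (ψ θ) : ℂ) * Complex.exp (Complex.I * (b : ℂ)) /
          ((Real.cos (θ / 2) : ℝ) : ℂ) ^ 2)) =
        fun b : ℝ => (-Complex.I * (Real.sqrt (ψ θ) : ℂ) /
          ((Real.cos (θ / 2) : ℝ) : ℂ) ^ 2) * Complex.exp (-Complex.I * (b : ℂ)) := by
      funext b
      rw [map_div₀, map_mul, map_mul, Complex.conj_I, Complex.conj_ofReal,
        ← Complex.exp_conj, map_mul, Complex.conj_I, Complex.conj_ofReal, map_pow,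
        Complex.conj_ofReal]
      ring
    rw [hfun]
    exact (Hexpn.const_mul _).deriv
  have D3 : deriv (fun a =>
      Complex.I * (Real.sqrt (ψ a) : ℂ) * Complex.exp (Complex.I * (φ : ℂ)) /
        ((Real.cos (a / 2) : ℝ) : ℂ) ^ 2 /
        (((1 + Real.tan (a / 2) ^ 2 : ℝ) : ℂ)) ^ 2) θ =
      (((deriv ψ θ / (2 * Real.sqrt (ψ θ)) * Real.cos (θ / 2) ^ 2 +
        Real.sqrt (ψ θ) * (-(Real.cos (θ / 2) * Real.sin (θ / 2)))) : ℝ) : ℂ) *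
        (Complex.I * Complex.exp (Complex.I * φ)) := by
    have hne : ∀ᶠ a in nhds θ, Real.cos (a / 2) ≠ 0 := by
      have hct : ContinuousAt (fun a : ℝ => Real.cos (a / 2)) θ :=
        (Real.continuous_cos.comp (continuous_id.div_const 2)).continuousAt
      exact hct.eventually_ne hcpos.ne'
    have heq : (fun a =>
        Complex.I * (Real.sqrt (ψ a) : ℂ) * Complex.exp (Complex.I * (φ : ℂ)) /
          ((Real.cos (a / 2) : ℝ) : ℂ) ^ 2 /
          (((1 + Real.tan (a / 2) ^ 2 : ℝ) : ℂ)) ^ 2) =ᶠ[nhds θ]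
        (fun a => ((Real.sqrt (ψ a) * Real.cos (a / 2) ^ 2 : ℝ) : ℂ) *
          (Complex.I * Complex.exp (Complex.I * (φ : ℂ)))) := by
      filter_upwards [hne] with a ha
      have h1 : (1 : ℝ) + Real.tan (a / 2) ^ 2 = 1 / Real.cos (a / 2) ^ 2 := by
        have h := Real.sin_sq_add_cos_sq (a / 2)
        rw [Real.tan_eq_sin_div_cos, div_pow]
        field_simp
        linarith [h]
      rw [h1]
      have hca : ((Real.cos (a / 2) : ℝ) : ℂ) ≠ 0 := Complex.ofReal_ne_zero.mpr ha
      have hgen : ∀ X y : ℂ, y ≠ 0 → X / y ^ 2 / (1 / y ^ 2) ^ 2 = X * y ^ 2 := by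
        intro X y hy; field_simp
      rw [Complex.ofReal_div, Complex.ofReal_one, Complex.ofReal_pow,
        Complex.ofReal_mul, Complex.ofReal_pow, hgen _ _ hca]
      ring
    rw [heq.deriv_eq]
    exact (Hv.ofReal_comp.mul_const _).deriv
  have D4 : deriv (fun b : ℝ =>
      Complex.I * (Real.sqrt (ψ θ) : ℂ) * Complex.exp (Complex.I * (b : ℂ)) /
        ((Real.cos (θ / 2) : ℝ) : ℂ) ^ 2 /
        (((1 + Real.tan (θ / 2) ^ 2 : ℝ) : ℂ)) ^ 2) φ =
      (Complex.I * (Real.sqrt (ψ θ) : ℂ) / ((Real.cos (θ / 2) : ℝ) : ℂ) ^ 2 /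
        (((1 + Real.tan (θ / 2) ^ 2 : ℝ) : ℂ)) ^ 2) *
        (Complex.I * Complex.exp (Complex.I * φ)) := by
    have hfun : (fun b : ℝ =>
        Complex.I * (Real.sqrt (ψ θ) : ℂ) * Complex.exp (Complex.I * (b : ℂ)) /
          ((Real.cos (θ / 2) : ℝ) : ℂ) ^ 2 /
          (((1 + Real.tan (θ / 2) ^ 2 : ℝ) : ℂ)) ^ 2) =
        fun b : ℝ => (Complex.I * (Real.sqrt (ψ θ) : ℂ) /
          ((Real.cos (θ / 2) : ℝ) : ℂ) ^ 2 /
          (((1 + Real.tan (θ / 2) ^ 2 : ℝ) : ℂ)) ^ 2) *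
            Complex.exp (Complex.I * (b : ℂ)) := by
      funext b; ring
    rw [hfun]
    exact (Hexp.const_mul _).deriv
  -- nonzero facts in ℂ
  have hcC : ((Real.cos (θ / 2) : ℝ) : ℂ) ≠ 0 := Complex.ofReal_ne_zero.mpr hcpos.ne'
  have hsC : ((Real.sin (θ / 2) : ℝ) : ℂ) ≠ 0 := Complex.ofReal_ne_zero.mpr hspos.ne'
  have hgC : ((Real.sqrt (ψ θ) : ℝ) : ℂ) ≠ 0 := Complex.ofReal_ne_zero.mpr hgpos.ne'
  have hw : Complex.exp (Complex.I * φ) ≠ 0 := Complex.exp_ne_zero _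
  have hwneg : Complex.exp (-Complex.I * φ) = (Complex.exp (Complex.I * φ))⁻¹ := by
    rw [← Complex.exp_neg]; congr 1; ring
  have hw2 : Complex.exp (-2 * Complex.I * φ) =
      (Complex.exp (Complex.I * φ))⁻¹ * (Complex.exp (Complex.I * φ))⁻¹ := by
    rw [← Complex.exp_neg, ← Complex.exp_add]; congr 1; ring
  have hI3 : Complex.I ^ 3 = -Complex.I := by rw [pow_succ, Complex.I_sq]; ring
  have hscC : (((Real.sin (θ / 2) : ℝ) : ℂ)) ^ 2 + (((Real.cos (θ / 2) : ℝ) : ℂ)) ^ 2 = 1 := by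
    exact_mod_cast congrArg (Complex.ofReal) hsc
  -- the shear
  have hσdef : σ = -Dxi (fun a b => (starRingEnd ℂ) (F a b)) θ φ := rfl
  have hσ : σ = Complex.I * (((deriv ψ θ - 2 * Real.cot θ * ψ θ) : ℝ) : ℂ) *
      Complex.exp (-2 * Complex.I * φ) / (2 * ((Real.sqrt (ψ θ) : ℝ) : ℂ)) := by
    rw [hσdef, hF]
    simp only [Dxi]
    rw [D1, D2, hw2, hwneg, hA]
    exact sigma_model hcpos.ne' hspos.ne' hgpos.ne' hw hsc
  -- the twist
  have hlamdef : lam = ((((1 + Real.tan (θ / 2) ^ 2) : ℝ) : ℂ) ^ 2 *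
      Dxi (fun a b => F a b / (((1 + Real.tan (a / 2) ^ 2) : ℝ) : ℂ) ^ 2) θ φ).im := rfl
  have him : ∀ r : ℝ, (((r : ℂ)) * Complex.I).im = r := by intro r; simp
  have hlam : lam = (deriv ψ θ + 2 * Real.cot θ * ψ θ) / (2 * Real.sqrt (ψ θ)) := by
    rw [hlamdef, hF]
    simp only [Dxi]
    rw [D3, D4, hwneg, htan, hB]
    rw [lam_model hcpos.ne' hspos.ne' hgpos.ne' hw hsc]
    exact him _
  have habs : ‖σ‖ =
      |deriv ψ θ - 2 * Real.cot θ * ψ θ| / (2 * Real.sqrt (ψ θ)) := by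
    rw [hσ, norm_div, norm_mul, norm_mul, Complex.norm_I, Complex.norm_real, Real.norm_eq_abs,
      norm_mul, Complex.norm_two, Complex.norm_real, Real.norm_eq_abs,
      show ‖Complex.exp (-2 * Complex.I * (φ : ℂ))‖ = 1 by
        rw [Complex.norm_exp]; simp,
      abs_of_pos hgpos]
    ring
  have h3 : lam ^ 2 - ‖σ‖ ^ 2 = 2 * Real.cot θ * deriv ψ θ := by
    rw [hlam, habs, div_pow, div_pow, sq_abs]
    have h2g : 2 * Real.sqrt (ψ θ) ≠ 0 := by positivity
    rw [div_sub_div_same, div_eq_iff (pow_ne_zero 2 h2g)]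
    linear_combination (-8 * Real.cot θ * deriv ψ θ) * hg2
  refine ⟨hlam, hσ, h3, ?_⟩
  rw [h3]
  have hcotpos : 0 < Real.cot θ := by
    rw [Real.cot_eq_cos_div_sin]
    have h1 : 0 < Real.cos θ := Real.cos_pos_of_mem_Ioo ⟨by linarith, hθπ⟩
    have h2 : 0 < Real.sin θ := Real.sin_pos_of_pos_of_lt_pi hθ0 (by linarith)
    positivity
  constructor <;> intro h <;> nlinarith [hcotpos]
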